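/- arXiv:2402.03060 — 6 statements merged into one kernel-verified Lean document; each statement's English description precedes it below -/
import Mathlib

section
/- Let H_img be a positive natural number and N_layer a number of convolutional layers. For each i in [1, N_layer], let H_ker(i) and H_st(i) be the kernel height and vertical stride of the i-th convolutional layer, with H_ker(i) ≥ H_st(i) ≥ 1. Define the input/output heights recursively by H_in(1) = H_img, H_out(i) = ⌊(H_in(i) − H_ker(i)) / H_st(i)⌋ + 1, and H_in(i+1) = H_out(i), assuming H_in(i) ≥ H_ker(i) for every i (so each convolution is well-defined). Let H_[st(i)] = ∏_{j=1}^{i} H_st(j). Then for every i in [1, N_layer], H_img ≥ H_out(i) × H_[st(i)]. -/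
/-- UniHENN, Theorem 1: in a chain of convolutional layers whose
kernel height is at least the vertical stride (which is at least 1), the output
height of the `i`-th layer times the product of the first `i` strides is bounded
by the original image height. -/
theorem unihenn_height_bound
    (Himg Nlayer : ℕ) (hHimg : 1 ≤ Himg)
    (Hker Hst Hin Hout : ℕ → ℕ)
    (hst : ∀ i, 1 ≤ i → i ≤ Nlayer → 1 ≤ Hst i)
    (hks : ∀ i, 1 ≤ i → i ≤ Nlayer → Hst i ≤ Hker i)
    (hin1 : Hin 1 = Himg)
    (hout : ∀ i, 1 ≤ i → i ≤ Nlayer → Hout i = (Hin i - Hker i) / Hst i + 1)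
    (hrec : ∀ i, 1 ≤ i → i < Nlayer → Hin (i + 1) = Hout i)
    (hdom : ∀ i, 1 ≤ i → i ≤ Nlayer → Hker i ≤ Hin i) :
    ∀ i, 1 ≤ i → i ≤ Nlayer →
      Hout i * ∏ j ∈ Finset.Icc 1 i, Hst j ≤ Himg := by
  have key : ∀ i, 1 ≤ i → i ≤ Nlayer → Hout i * Hst i ≤ Hin i := by
    intro i h1 h2
    rw [hout i h1 h2, add_mul, one_mul]
    calc (Hin i - Hker i) / Hst i * Hst i + Hst i
        ≤ (Hin i - Hker i) + Hker i := by
          exact Nat.add_le_add (Nat.div_mul_le_self _ _) (hks i h1 h2)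
      _ = Hin i := Nat.sub_add_cancel (hdom i h1 h2)
  intro i
  induction i with
  | zero => intro h; omega
  | succ n ih =>
    intro _ hle
    rcases Nat.eq_zero_or_pos n with hn | hn
    · subst hn
      simpa [hin1] using key 1 le_rfl hle
    · rw [Finset.prod_Icc_succ_top (by omega)]
      calc Hout (n+1) * ((∏ j ∈ Finset.Icc 1 n, Hst j) * Hst (n+1))
          = (Hout (n+1) * Hst (n+1)) * ∏ j ∈ Finset.Icc 1 n, Hst j := by ring
        _ ≤ Hin (n+1) * ∏ j ∈ Finset.Icc 1 n, Hst j :=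
            Nat.mul_le_mul_right _ (key (n+1) (by omega) hle)
        _ = Hout n * ∏ j ∈ Finset.Icc 1 n, Hst j := by
            rw [hrec n hn (by omega)]
        _ ≤ Himg := ih hn (by omega)
end

section
/- Let W_img be a positive natural number and N_layer a number of convolutional layers. For each i in [1, N_layer], let W_ker(i) and W_st(i) be the kernel width and horizontal stride of the i-th convolutional layer, with W_ker(i) ≥ W_st(i) ≥ 1. Define the input/output widths recursively by W_in(1) = W_img, W_out(i) = ⌊(W_in(i) − W_ker(i)) / W_st(i)⌋ + 1, and W_in(i+1) = W_out(i), assuming W_in(i) ≥ W_ker(i) for every i. Let W_[st(i)] = ∏_{j=1}^{i} W_st(j). Then for every i in [1, N_layer], W_img ≥ W_out(i) × W_[st(i)]. -/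
/-- UniHENN, Corollary 1.1: in a chain of convolutional layers whose
kernel width is at least the horizontal stride (which is at least 1), the output
width of the `i`-th layer times the product of the first `i` strides is bounded
by the original image width. -/
theorem unihenn_width_bound
    (Wimg Nlayer : ℕ) (hWimg : 1 ≤ Wimg)
    (Wker Wst Win Wout : ℕ → ℕ)
    (hst : ∀ i, 1 ≤ i → i ≤ Nlayer → 1 ≤ Wst i)
    (hks : ∀ i, 1 ≤ i → i ≤ Nlayer → Wst i ≤ Wker i)
    (hin1 : Win 1 = Wimg)
    (hout : ∀ i, 1 ≤ i → i ≤ Nlayer → Wout i = (Win i - Wker i) / Wst i + 1)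
    (hrec : ∀ i, 1 ≤ i → i < Nlayer → Win (i + 1) = Wout i)
    (hdom : ∀ i, 1 ≤ i → i ≤ Nlayer → Wker i ≤ Win i) :
    ∀ i, 1 ≤ i → i ≤ Nlayer →
      Wout i * ∏ j ∈ Finset.Icc 1 i, Wst j ≤ Wimg := by
  have key : ∀ i, 1 ≤ i → i ≤ Nlayer → Wout i * Wst i ≤ Win i := by
    intro i h1 h2
    rw [hout i h1 h2, add_mul, one_mul]
    calc (Win i - Wker i) / Wst i * Wst i + Wst i
        ≤ (Win i - Wker i) + Wker i :=
          Nat.add_le_add (Nat.div_mul_le_self _ _) (hks i h1 h2)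
      _ = Win i := Nat.sub_add_cancel (hdom i h1 h2)
  intro i h1
  induction i, h1 using Nat.le_induction with
  | base =>
    intro h2
    simpa [Finset.Icc_self, hin1] using key 1 le_rfl h2
  | succ n hn ih =>
    intro h2
    have hn2 : n ≤ Nlayer := by omega
    calc Wout (n+1) * ∏ j ∈ Finset.Icc 1 (n+1), Wst j
        = Wout (n+1) * Wst (n+1) * ∏ j ∈ Finset.Icc 1 n, Wst j := by
          rw [Finset.prod_Icc_succ_top (by omega : 1 ≤ n+1)]; ring
      _ ≤ Win (n+1) * ∏ j ∈ Finset.Icc 1 n, Wst j :=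
          Nat.mul_le_mul_right _ (key (n+1) (by omega) h2)
      _ = Wout n * ∏ j ∈ Finset.Icc 1 n, Wst j := by rw [hrec n hn (by omega)]
      _ ≤ Wimg := ih hn2
end

section
/- Let S ≥ 1 be a natural number, a : ℕ → ℝ, and let x : ℕ → ℝ be the stride-S sparse vector defined by x(m) = a(m/S) if S divides m and x(m) = 0 otherwise. Then for every index i, accumulating the S left-rotations of x satisfies Σ_{t=0}^{S−1} x(i + t) = a(⌈i/S⌉). That is, after accumulating S−1 successive left-rotations of a vector whose valid values occur every S slots, every position i holds the valid value whose original position is the unique multiple of S in the window [i, i+S−1]. -/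
/-- if `x` is the stride-`S` sparse vector with `x(m) = a(m/S)`
when `S ∣ m` and `x(m) = 0` otherwise, then accumulating the `S` left-rotations
of `x` puts at every position `i` the valid value whose original position is the
unique multiple of `S` in the window `[i, i+S−1]`:
`∑_{t=0}^{S−1} x(i+t) = a(⌈i/S⌉)`. -/
theorem unihenn_flatten_accumulate
    (S : ℕ) (hS : 1 ≤ S) (a x : ℕ → ℝ)
    (hx : ∀ m, x m = if S ∣ m then a (m / S) else 0) :
    ∀ i, ∑ t ∈ Finset.range S, x (i + t) = a (i ⌈/⌉ S) := by
  intro i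
  have hS0 : 0 < S := hS
  obtain ⟨q, r, hr, hi⟩ : ∃ q r, r < S ∧ i = S * q + r :=
    ⟨i / S, i % S, Nat.mod_lt _ hS0, (Nat.div_add_mod i S).symm⟩
  set t₀ : ℕ := (S - r) % S with ht₀
  have ht₀lt : t₀ < S := Nat.mod_lt _ hS0
  have key : i + t₀ = S * (i ⌈/⌉ S) := by
    rw [Nat.ceilDiv_eq_add_pred_div]
    rcases Nat.eq_zero_or_pos r with h0 | hpos
    · have h1 : t₀ = 0 := by simp [ht₀, h0]
      have h2 : (i + S - 1) / S = q := by
        subst hi; rw [h0]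
        have e : S * q + 0 + S - 1 = S * q + (S - 1) := by omega
        rw [e, Nat.mul_add_div hS0, Nat.div_eq_of_lt (by omega), Nat.add_zero]
      rw [h2, h1, hi, h0]
      simp
    · have h1 : t₀ = S - r := Nat.mod_eq_of_lt (by omega)
      have h2 : (i + S - 1) / S = q + 1 := by
        subst hi
        have e : S * q + r + S - 1 = S * (q + 1) + (r - 1) := by ring_nf; omega
        rw [e, Nat.mul_add_div hS0, Nat.div_eq_of_lt (by omega)]
      rw [h2, h1, hi, Nat.mul_add, Nat.mul_one, Nat.add_assoc]
      congr 1
      omega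
  have hdvd : S ∣ i + t₀ := ⟨_, key⟩
  rw [Finset.sum_eq_single_of_mem t₀ (Finset.mem_range.mpr ht₀lt)]
  · rw [hx, if_pos hdvd, key, Nat.mul_div_cancel_left _ hS0]
  · intro t ht hne
    rw [hx, if_neg]
    intro hdvd'
    have htlt : t < S := Finset.mem_range.mp ht
    have h1 : (S:ℤ) ∣ ((i:ℤ) + t) := by exact_mod_cast Int.natCast_dvd_natCast.mpr hdvd'
    have h2 : (S:ℤ) ∣ ((i:ℤ) + t₀) := by exact_mod_cast Int.natCast_dvd_natCast.mpr hdvd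
    have h3 : (S:ℤ) ∣ (t : ℤ) - t₀ := by
      have hsub := dvd_sub h1 h2
      have e : ((i:ℤ) + t) - ((i:ℤ) + t₀) = (t:ℤ) - t₀ := by ring
      rwa [e] at hsub
    have h4 : (t:ℤ) - t₀ = 0 := by
      refine Int.eq_zero_of_abs_lt_dvd h3 ?_
      rw [abs_sub_lt_iff]
      constructor <;> [skip; skip] <;> push_cast <;> omega
    omega
end

section
/- Let W, H, I, K, S be natural numbers with I ≥ 1, let img : ℕ × ℕ → ℝ be a W × H image, Ker : ℕ × ℕ → ℝ a K × K kernel, and let x : ℕ → ℝ be a flattening of the image with data interval I, i.e., x(I·(W·r + c)) = img(r, c) for all r < H and c < W. Then for every output position (r', c') with r'·S + K ≤ H and c'·S + K ≤ W, the rotate-and-multiply convolution of UniHENN is correct: Σ_{j=0}^{K−1} Σ_{k=0}^{K−1} Ker(j, k) · x( I·(W·r'·S + c'·S) + I·(k + W·j) ) = Σ_{j=0}^{K−1} Σ_{k=0}^{K−1} Ker(j, k) · img(r'·S + j, c'·S + k), i.e., it equals the standard 2D convolution of the image with the kernel at stride S evaluated at (r', c'). -/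
/-- correctness of UniHENN's rotate-and-multiply convolution on the
row-major flattened image with data interval `I`.  If
`x(I·(W·r + c)) = img(r, c)` for all `r < H`, `c < W`, then for every output
position `(r', c')` with `r'·S + K ≤ H` and `c'·S + K ≤ W`,
`∑_{j<K} ∑_{k<K} Ker(j,k) · x(I·(W·r'·S + c'·S) + I·(k + W·j))` equals the
standard stride-`S` 2D convolution
`∑_{j<K} ∑_{k<K} Ker(j,k) · img(r'·S + j, c'·S + k)`. -/
theorem unihenn_convolution_correct
    (W H I K S : ℕ) (hI : 1 ≤ I)
    (img Ker : ℕ → ℕ → ℝ) (x : ℕ → ℝ)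
    (hflat : ∀ r c, r < H → c < W → x (I * (W * r + c)) = img r c) :
    ∀ r' c', r' * S + K ≤ H → c' * S + K ≤ W →
      ∑ j ∈ Finset.range K, ∑ k ∈ Finset.range K,
          Ker j k * x (I * (W * (r' * S) + c' * S) + I * (k + W * j)) =
      ∑ j ∈ Finset.range K, ∑ k ∈ Finset.range K,
          Ker j k * img (r' * S + j) (c' * S + k) := by
  intro r' c' hr hc
  refine Finset.sum_congr rfl fun j hj => Finset.sum_congr rfl fun k hk => ?_
  simp only [Finset.mem_range] at hj hk
  have hidx : I * (W * (r' * S) + c' * S) + I * (k + W * j)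
      = I * (W * (r' * S + j) + (c' * S + k)) := by ring
  rw [hidx, hflat _ _ (by omega) (by omega)]
end

section
/- Let m, q be natural numbers with m ≥ 1, q ≥ 1, and set n = q·m. Let x : Fin n → ℝ be an input vector and W : Fin n → Fin m → ℝ a (padded) weight matrix of an FC layer with n inputs and m outputs. Define the rearranged weight vectors M_rot(o) : Fin n → ℝ for 0 ≤ o < m by M_rot(o)(j) = W((j + o) mod n, j mod m). Define C_sum : Fin n → ℝ by C_sum(j) = Σ_{o=0}^{m−1} x((j + o) mod n) · M_rot(o)(j), and C_out : Fin n → ℝ by C_out(t) = Σ_{i=0}^{q−1} C_sum((t + i·m) mod n). Then for every output index t < m, C_out(t) = Σ_{s=0}^{n−1} W(s, t) · x(s); that is, UniHENN's FC-layer procedure—using only m slot-wise rotations and multiplications followed by q block rotations and additions—computes the exact matrix-vector product of the transposed weight matrix with the input. -/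
lemma sum_range_mul_eq (g : ℕ → ℝ) (m : ℕ) :
    ∀ q : ℕ, ∑ k ∈ Finset.range (q * m), g k
      = ∑ i ∈ Finset.range q, ∑ o ∈ Finset.range m, g (i * m + o) := by
  intro q
  induction q with
  | zero => simp
  | succ q ih =>
    rw [Nat.succ_mul, Finset.sum_range_add, ih, Finset.sum_range_succ]

/-- correctness of UniHENN's fully connected layer.  With `n = q·m`
slots, input `x : Fin n → ℝ` and padded weight matrix `W : Fin n → Fin m → ℝ`,
the rearranged weights `M_rot(o)(j) = W((j+o) mod n, j mod m)`, the accumulation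
`C_sum(j) = ∑_{o<m} x((j+o) mod n) · M_rot(o)(j)`, and the block accumulation
`C_out(t) = ∑_{i<q} C_sum((t + i·m) mod n)` yield, for every output index
`t < m`, the exact matrix-vector product `C_out(t) = ∑_{s<n} W(s, t) · x(s)`. -/
theorem unihenn_fc_layer_correct
    (m q n : ℕ) (hm : 1 ≤ m) (hq : 1 ≤ q) (hn : n = q * m)
    (x : Fin n → ℝ) (W : Fin n → Fin m → ℝ)
    (Mrot : ℕ → Fin n → ℝ)
    (hMrot : ∀ o : ℕ, ∀ j : Fin n,
      Mrot o j =
        W ⟨((j : ℕ) + o) % n, Nat.mod_lt _ (by rw [hn]; exact Nat.mul_pos hq hm)⟩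
          ⟨(j : ℕ) % m, Nat.mod_lt _ hm⟩)
    (Csum : Fin n → ℝ)
    (hCsum : ∀ j : Fin n,
      Csum j = ∑ o ∈ Finset.range m,
        x ⟨((j : ℕ) + o) % n, Nat.mod_lt _ (by rw [hn]; exact Nat.mul_pos hq hm)⟩ *
          Mrot o j)
    (Cout : Fin n → ℝ)
    (hCout : ∀ t : Fin n,
      Cout t = ∑ i ∈ Finset.range q,
        Csum ⟨((t : ℕ) + i * m) % n, Nat.mod_lt _ (by rw [hn]; exact Nat.mul_pos hq hm)⟩) :
    ∀ t : Fin n, ∀ ht : (t : ℕ) < m,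
      Cout t = ∑ s : Fin n, W s ⟨(t : ℕ), ht⟩ * x s := by
  intro t ht
  have hnpos : 0 < n := by rw [hn]; exact Nat.mul_pos hq hm
  haveI : NeZero n := ⟨hnpos.ne'⟩
  have hmn : m ∣ n := ⟨q, by rw [hn, Nat.mul_comm]⟩
  set tm : Fin m := ⟨(t : ℕ), ht⟩ with htm
  set g : ℕ → ℝ := fun k => x ⟨((t : ℕ) + k) % n, Nat.mod_lt _ hnpos⟩ *
      W ⟨((t : ℕ) + k) % n, Nat.mod_lt _ hnpos⟩ tm with hg
  have step1 : Cout t = ∑ i ∈ Finset.range q, ∑ o ∈ Finset.range m, g (i * m + o) := by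
    rw [hCout]
    refine Finset.sum_congr rfl fun i _ => ?_
    rw [hCsum]
    refine Finset.sum_congr rfl fun o _ => ?_
    rw [hMrot]
    have h1 : (((t : ℕ) + i * m) % n + o) % n = ((t : ℕ) + (i * m + o)) % n := by
      rw [Nat.mod_add_mod, Nat.add_assoc]
    have h2 : ((t : ℕ) + i * m) % n % m = (t : ℕ) := by
      rw [Nat.mod_mod_of_dvd _ hmn, Nat.add_mul_mod_self_right, Nat.mod_eq_of_lt ht]
    simp only [hg]
    congr 1 <;> simp [h1, h2, htm]
  rw [step1, ← sum_range_mul_eq, ← hn, ← Fin.sum_univ_eq_sum_range]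
  have step2 : ∀ j : Fin n, g (j : ℕ) = x (t + j) * W (t + j) tm := by
    intro j
    simp only [hg]
    congr 1
  simp only [step2]
  rw [← Equiv.sum_comp (Equiv.addLeft t) (fun s => W s tm * x s)]
  refine Finset.sum_congr rfl fun j _ => ?_
  simp [mul_comm, Equiv.addLeft]
end

section
/- Let H_img be a positive natural number and consider an alternating sequence of N layers where layer i is either a convolutional layer with kernel height k_i and stride s_i satisfying k_i ≥ s_i ≥ 1, or an average pooling layer with kernel size c_i ≥ 1 (which acts as a convolution with kernel height c_i and stride c_i). Define heights recursively by H_in(1) = H_img, H_out(i) = ⌊(H_in(i) − K_i)/S_i⌋ + 1 where (K_i, S_i) = (k_i, s_i) for a convolutional layer and (c_i, c_i) for an average pooling layer, H_in(i+1) = H_out(i), and assume H_in(i) ≥ K_i for every i. Then for every i in [1, N], H_img ≥ H_out(i) × ∏_{j=1}^{i} S_j. In particular, inserting average pooling layers (or size-preserving activation layers) between convolutional layers does not invalidate the slot-size bound of Theorem 1. -/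
/-- the slot-size bound of Theorem 1 extends to alternating chains
of convolutional layers (kernel height `k i`, stride `s i`, with
`k i ≥ s i ≥ 1`) and average pooling layers (kernel size `c i ≥ 1`, acting as a
convolution with kernel height `c i` and stride `c i`): for every layer `i`,
`H_img ≥ H_out(i) × ∏_{j=1}^{i} S j` where `K, S` are the effective kernel
heights and strides. -/
theorem unihenn_height_bound_with_pooling
    (Himg N : ℕ) (hHimg : 1 ≤ Himg)
    (isConv : ℕ → Prop) (k s c K S : ℕ → ℕ)
    (hconv : ∀ i, 1 ≤ i → i ≤ N → isConv i → 1 ≤ s i ∧ s i ≤ k i)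
    (hpool : ∀ i, 1 ≤ i → i ≤ N → ¬ isConv i → 1 ≤ c i)
    (hKSconv : ∀ i, 1 ≤ i → i ≤ N → isConv i → K i = k i ∧ S i = s i)
    (hKSpool : ∀ i, 1 ≤ i → i ≤ N → ¬ isConv i → K i = c i ∧ S i = c i)
    (Hin Hout : ℕ → ℕ)
    (hin1 : Hin 1 = Himg)
    (hout : ∀ i, 1 ≤ i → i ≤ N → Hout i = (Hin i - K i) / S i + 1)
    (hrec : ∀ i, 1 ≤ i → i < N → Hin (i + 1) = Hout i)
    (hdom : ∀ i, 1 ≤ i → i ≤ N → K i ≤ Hin i) :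
    ∀ i, 1 ≤ i → i ≤ N →
      Hout i * ∏ j ∈ Finset.Icc 1 i, S j ≤ Himg := by
  -- effective stride/kernel facts
  have hSK : ∀ i, 1 ≤ i → i ≤ N → 1 ≤ S i ∧ S i ≤ K i := by
    intro i h1 h2
    by_cases hc : isConv i
    · obtain ⟨hk, hs⟩ := hKSconv i h1 h2 hc
      obtain ⟨h1s, h2s⟩ := hconv i h1 h2 hc
      rw [hk, hs]; exact ⟨h1s, h2s⟩
    · obtain ⟨hk, hs⟩ := hKSpool i h1 h2 hc
      rw [hk, hs]; exact ⟨hpool i h1 h2 hc, le_rfl⟩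
  have key : ∀ i, 1 ≤ i → i ≤ N → Hout i * S i ≤ Hin i := by
    intro i h1 h2
    obtain ⟨hS1, hSK'⟩ := hSK i h1 h2
    rw [hout i h1 h2, add_mul, one_mul]
    calc (Hin i - K i) / S i * S i + S i
        ≤ (Hin i - K i) + K i := by
          exact Nat.add_le_add (Nat.div_mul_le_self _ _) hSK'
      _ = Hin i := Nat.sub_add_cancel (hdom i h1 h2)
  intro i
  induction i with
  | zero => intro h; omega
  | succ n ih =>
    intro h1 h2
    rcases Nat.eq_or_lt_of_le h1 with heq | hlt
    · subst hin1
      have hn0 : n = 0 := by omega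
      subst hn0
      simp only [Finset.Icc_self, Finset.prod_singleton]
      exact key 1 le_rfl h2
    · have hn1 : 1 ≤ n := by omega
      have hnN : n ≤ N := by omega
      have hprod : ∏ j ∈ Finset.Icc 1 (n + 1), S j =
          (∏ j ∈ Finset.Icc 1 n, S j) * S (n + 1) := by
        rw [← Finset.prod_Icc_succ_top (by omega : 1 ≤ n + 1)]
      calc Hout (n + 1) * ∏ j ∈ Finset.Icc 1 (n + 1), S j
          = (Hout (n + 1) * S (n + 1)) * ∏ j ∈ Finset.Icc 1 n, S j := by
            rw [hprod]; ring
        _ ≤ Hin (n + 1) * ∏ j ∈ Finset.Icc 1 n, S j :=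
            Nat.mul_le_mul_right _ (key (n + 1) (by omega) h2)
        _ = Hout n * ∏ j ∈ Finset.Icc 1 n, S j := by
            rw [hrec n hn1 (by omega)]
        _ ≤ Himg := ih hn1 hnN
end
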